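/- For all integers a, b with a + b ≥ 0, the identity Σ_{c≥0} [a+b choose c, a+c, b−2c]_{λ²} · λ^{2c(a+c)} · (−λ; λ)_{b−2c} = [2(a+b) choose b]_λ holds in ℚ(λ); here the sum is finite since the multinomial vanishes unless c ≥ 0, a+c ≥ 0 and b−2c ≥ 0. -/

import Mathlib

/-!
The identity is a `λ`-analogue of reading off the coefficient of `x ^ b` in
`(1 + x) ^ (2n) = (1 + 2x + x²) ^ n`, `n = a + b`. Both sides `F a b` satisfy
`F a b = F (a-1) b + (λ^(2a+b-1) + λ^(2a+b)) F a (b-1) + λ^(4a+2b) F (a+1) (b-2)`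
for `a + b > 0`, and they agree for `a + b = 0`. For the Gaussian binomial this is `λ`-Pascal
applied twice. For the sum, Pascal's rule for the `λ²`-multinomial splits each summand three
ways; the exchange relation `(λ^(2(m+1)) - 1) [n; c, j, m+1] = (λ^(2(c+1)) - 1) [n; c+1, j, m]`
then trades the factor `1 + λ^m` coming from `(-λ; λ)_m` for `1 + λ`, at the cost of terms
`(λ^(2c) - 1) · summand` that telescope in `c`.
-/

noncomputable section

/-- The field `ℚ(λ)` of rational functions. -/
abbrev K : Type := RatFunc ℚ

/-- The indeterminate `λ`. -/
def Xq : K := RatFunc.X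

/-- `(n)_t = ∏_{i=1}^n (t^i − 1)`. -/
def qfact (t : K) (n : ℕ) : K := ∏ i ∈ Finset.range n, (t ^ (i + 1) - 1)

/-- `(x; y)_n = ∏_{i=1}^n (1 − x·y^{i−1})`. -/
def qpoch (x y : K) (n : ℕ) : K := ∏ i ∈ Finset.range n, (1 - x * y ^ i)

/-- The Gaussian binomial `[n choose m]_t` (with value `0` out of range). -/
def qbinomN (t : K) (n m : ℕ) : K :=
  if m ≤ n then qfact t n / (qfact t m * qfact t (n - m)) else 0

/-- The `t`-multinomial `[m₁+m₂+m₃ choose m₁, m₂, m₃]_t`. -/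
def qmul3 (t : K) (m1 m2 m3 : ℕ) : K :=
  qfact t (m1 + m2 + m3) / (qfact t m1 * qfact t m2 * qfact t m3)

/-- The Gaussian binomial `[n choose m]_t` for integer arguments
(with value `0` if `m < 0`, `m > n`, or `n < 0`). -/
def qbinomZ (t : K) (n m : ℤ) : K :=
  if 0 ≤ m ∧ m ≤ n then qfact t n.toNat / (qfact t m.toNat * qfact t (n - m).toNat) else 0

/-- The `t`-multinomial `[m₁+m₂+m₃ choose m₁, m₂, m₃]_t` for integer arguments
(with value `0` unless all `mᵢ ≥ 0`). -/
def qmul3Z (t : K) (m1 m2 m3 : ℤ) : K :=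
  if 0 ≤ m1 ∧ 0 ≤ m2 ∧ 0 ≤ m3 then
    qfact t (m1 + m2 + m3).toNat / (qfact t m1.toNat * qfact t m2.toNat * qfact t m3.toNat)
  else 0

@[simp] lemma qfact_zero (t : K) : qfact t 0 = 1 := rfl

lemma qfact_succ (t : K) (n : ℕ) : qfact t (n + 1) = qfact t n * (t ^ (n + 1) - 1) :=
  Finset.prod_range_succ _ _

lemma qpoch_succ (x y : K) (n : ℕ) : qpoch x y (n + 1) = qpoch x y n * (1 - x * y ^ n) :=
  Finset.prod_range_succ _ _

lemma pow_succ_sub_one_ne_zero {R : Type*} [Ring R] {t : R} (ht : ¬IsOfFinOrder t) (n : ℕ) :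
    t ^ (n + 1) - 1 ≠ 0 :=
  sub_ne_zero.2 fun h => ht (isOfFinOrder_iff_pow_eq_one.2 ⟨n + 1, n.succ_pos, h⟩)

lemma qfact_ne_zero {t : K} (ht : ¬IsOfFinOrder t) (n : ℕ) : qfact t n ≠ 0 :=
  Finset.prod_ne_zero_iff.2 fun i _ => pow_succ_sub_one_ne_zero ht i

lemma zpow_two_mul {G : Type*} [DivisionMonoid G] (a : G) (n : ℤ) :
    a ^ (2 * n) = (a ^ 2) ^ n := by
  rw [zpow_mul, zpow_ofNat]

lemma qmul3Z_natCast (t : K) (c j m : ℕ) :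
    qmul3Z t c j m = qfact t (c + j + m) / (qfact t c * qfact t j * qfact t m) := by
  simp only [qmul3Z, Nat.cast_nonneg, and_self, ↓reduceIte, Int.toNat_natCast]
  norm_cast

lemma qmul3Z_of_neg (t : K) {c j m : ℤ} (h : c < 0 ∨ j < 0 ∨ m < 0) : qmul3Z t c j m = 0 :=
  if_neg (by omega)

lemma qmul3Z_comm_left (t : K) (c j m : ℤ) : qmul3Z t c j m = qmul3Z t j c m := by
  simp only [qmul3Z, add_comm c j, mul_comm (qfact t c.toNat), and_left_comm]

lemma qmul3Z_comm_right (t : K) (c j m : ℤ) : qmul3Z t c j m = qmul3Z t c m j := by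
  simp only [qmul3Z, add_assoc, add_comm j m, mul_assoc, mul_comm (qfact t j.toNat),
    and_comm (a := 0 ≤ j)]

lemma qmul3Z_succ_mul {t : K} (ht : ¬IsOfFinOrder t) (c j m : ℤ) :
    qmul3Z t (c + 1) j m * (t ^ (c + 1) - 1) = qmul3Z t c j m * (t ^ (c + j + m + 1) - 1) := by
  rcases lt_trichotomy c (-1) with hc | rfl | hc
  · rw [qmul3Z_of_neg t (by omega), qmul3Z_of_neg t (by omega), zero_mul, zero_mul]
  · rw [qmul3Z_of_neg t (c := -1) (by omega)]; simp
  by_cases hjm : 0 ≤ j ∧ 0 ≤ m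
  · lift c to ℕ using by omega
    lift j to ℕ using hjm.1
    lift m to ℕ using hjm.2
    have e1 : ((c : ℤ) + 1) = ((c + 1 : ℕ) : ℤ) := by push_cast; ring
    have e2 : ((c : ℤ) + j + m + 1) = ((c + j + m + 1 : ℕ) : ℤ) := by push_cast; ring
    rw [e1, e2, qmul3Z_natCast, qmul3Z_natCast, zpow_natCast, zpow_natCast,
      show c + 1 + j + m = c + j + m + 1 by ring, qfact_succ, qfact_succ]
    field_simp [qfact_ne_zero ht, pow_succ_sub_one_ne_zero ht c]
  · rw [qmul3Z_of_neg t (by omega), qmul3Z_of_neg t (by omega), zero_mul, zero_mul]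

lemma qmul3Z_pred_mul {t : K} (ht : ¬IsOfFinOrder t) (c j m : ℤ) :
    qmul3Z t (c - 1) j m * (t ^ (c + j + m) - 1) = qmul3Z t c j m * (t ^ c - 1) := by
  have h := qmul3Z_succ_mul ht (c - 1) j m
  rw [sub_add_cancel, show c - 1 + j + m + 1 = c + j + m by ring] at h
  exact h.symm

lemma qmul3Z_exchange {t : K} (ht : ¬IsOfFinOrder t) (c j m : ℤ) :
    qmul3Z t c j (m + 1) * (t ^ (m + 1) - 1) = qmul3Z t (c + 1) j m * (t ^ (c + 1) - 1) := by
  rw [qmul3Z_succ_mul ht, qmul3Z_comm_right, qmul3Z_comm_left, qmul3Z_succ_mul ht,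
    qmul3Z_comm_left, qmul3Z_comm_right, show m + c + j + 1 = c + j + m + 1 by ring]

lemma qmul3Z_pascal {t : K} (ht0 : t ≠ 0) (ht : ¬IsOfFinOrder t) {c j m : ℤ}
    (h : 0 < c + j + m) :
    qmul3Z t c j m = qmul3Z t c (j - 1) m + t ^ j * qmul3Z t c j (m - 1)
      + t ^ (j + m) * qmul3Z t (c - 1) j m := by
  obtain ⟨n, hn⟩ : ∃ n : ℕ, c + j + m = (n + 1 : ℕ) := ⟨(c + j + m - 1).toNat, by omega⟩
  have hT : t ^ (c + j + m) - 1 ≠ 0 := by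
    rw [hn, zpow_natCast]
    exact pow_succ_sub_one_ne_zero ht n
  refine mul_right_cancel₀ hT ?_
  have hj : qmul3Z t c (j - 1) m * (t ^ (c + j + m) - 1) = qmul3Z t c j m * (t ^ j - 1) := by
    rw [qmul3Z_comm_left t c, qmul3Z_comm_left t c j, show c + j + m = j + c + m by ring]
    exact qmul3Z_pred_mul ht j c m
  have hm : qmul3Z t c j (m - 1) * (t ^ (c + j + m) - 1) = qmul3Z t c j m * (t ^ m - 1) := by
    rw [qmul3Z_comm_right t c j, qmul3Z_comm_right t c j m, qmul3Z_comm_left t c,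
      qmul3Z_comm_left t c m, show c + j + m = m + c + j by ring]
    exact qmul3Z_pred_mul ht m c j
  have hc := qmul3Z_pred_mul ht c j m
  have e1 : t ^ j * t ^ m = t ^ (j + m) := (zpow_add₀ ht0 j m).symm
  have e2 : t ^ (j + m) * t ^ c = t ^ (c + j + m) := by
    rw [← zpow_add₀ ht0]; ring_nf
  -- `(t^j - 1) + t^j (t^m - 1) + t^(j+m) (t^c - 1) = t^(c+j+m) - 1`
  linear_combination -hj - t ^ j * hm - t ^ (j + m) * hc - qmul3Z t c j m * e1
    - qmul3Z t c j m * e2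

lemma qbinomZ_eq_qmul3Z (t : K) (n m : ℤ) : qbinomZ t n m = qmul3Z t m (n - m) 0 := by
  simp only [qbinomZ, qmul3Z, le_refl, and_true, sub_nonneg, add_zero, add_sub_cancel,
    Int.toNat_zero, qfact_zero, mul_one]

lemma qbinomZ_pascal {t : K} (ht0 : t ≠ 0) (ht : ¬IsOfFinOrder t) {n : ℤ} (hn : 0 < n) (m : ℤ) :
    qbinomZ t n m = qbinomZ t (n - 1) m + t ^ (n - m) * qbinomZ t (n - 1) (m - 1) := by
  rw [qbinomZ_eq_qmul3Z, qmul3Z_pascal ht0 ht (by omega), qmul3Z_of_neg t (m := 0 - 1) (by omega),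
    mul_zero, add_zero, add_zero, qbinomZ_eq_qmul3Z, qbinomZ_eq_qmul3Z,
    show n - 1 - m = n - m - 1 by ring, show n - 1 - (m - 1) = n - m by ring]

lemma qbinomZ_two_mul_recurrence {q : K} (hq0 : q ≠ 0) (hq : ¬IsOfFinOrder q) {a b : ℤ}
    (h : 0 < a + b) :
    qbinomZ q (2 * (a + b)) b = qbinomZ q (2 * (a - 1 + b)) b
      + (q ^ (2 * a + b - 1) + q ^ (2 * a + b)) * qbinomZ q (2 * (a + (b - 1))) (b - 1)
      + q ^ (4 * a + 2 * b) * qbinomZ q (2 * (a + 1 + (b - 2))) (b - 2) := by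
  have h1 := qbinomZ_pascal hq0 hq (n := 2 * (a + b)) (by omega) b
  have h2 := qbinomZ_pascal hq0 hq (n := 2 * (a + b) - 1) (by omega) b
  have h3 := qbinomZ_pascal hq0 hq (n := 2 * (a + b) - 1) (by omega) (b - 1)
  have e : q ^ (2 * a + b) * q ^ (2 * a + b) = q ^ (4 * a + 2 * b) := by
    rw [← zpow_add₀ hq0]; ring_nf
  rw [show 2 * (a - 1 + b) = 2 * (a + b) - 1 - 1 by ring,
    show 2 * (a + (b - 1)) = 2 * (a + b) - 1 - 1 by ring,
    show 2 * (a + 1 + (b - 2)) = 2 * (a + b) - 1 - 1 by ring]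
  rw [show 2 * (a + b) - b = 2 * a + b by ring] at h1
  rw [show 2 * (a + b) - 1 - b = 2 * a + b - 1 by ring] at h2
  rw [show 2 * (a + b) - 1 - (b - 1) = 2 * a + b by ring, show b - 1 - 1 = b - 2 by ring] at h3
  linear_combination h1 + h2 + q ^ (2 * a + b) * h3
    + qbinomZ q (2 * (a + b) - 1 - 1) (b - 2) * e

def qtrinomTerm (q : K) (c j m : ℤ) : K :=
  qmul3Z (q ^ 2) c j m * q ^ (2 * c * j) * qpoch (-q) q m.toNat

section qtrinomTerm

variable {q : K} (hq0 : q ≠ 0) (hq : ¬IsOfFinOrder (q ^ 2))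
include hq0 hq

lemma qtrinomTerm_pascal {c j m : ℤ} (h : 0 < c + j + m) :
    qtrinomTerm q c j m = q ^ (2 * c) * qtrinomTerm q c (j - 1) m
      + q ^ (2 * j) * (1 + q ^ m) * qtrinomTerm q c j (m - 1)
      + q ^ (4 * j + 2 * m) * qtrinomTerm q (c - 1) j m := by
  have hP : qmul3Z (q ^ 2) c j (m - 1) * ((1 + q ^ m) * qpoch (-q) q (m - 1).toNat)
      = qmul3Z (q ^ 2) c j (m - 1) * qpoch (-q) q m.toNat := by
    by_cases hm : 0 < m
    · lift m - 1 to ℕ using by omega with k hk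
      rw [show m.toNat = k + 1 by omega, show m = ((k + 1 : ℕ) : ℤ) by omega, zpow_natCast,
        qpoch_succ, Int.toNat_natCast]
      ring
    · rw [qmul3Z_of_neg _ (by omega), zero_mul, zero_mul]
  have f1 : q ^ (2 * c) * q ^ (2 * c * (j - 1)) = q ^ (2 * c * j) := by
    rw [← zpow_add₀ hq0]; ring_nf
  have f2 : (q ^ 2) ^ j = q ^ (2 * j) := (zpow_two_mul q j).symm
  have f3 : q ^ (4 * j + 2 * m) * q ^ (2 * (c - 1) * j) = (q ^ 2) ^ (j + m) * q ^ (2 * c * j) := by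
    rw [← zpow_two_mul, ← zpow_add₀ hq0, ← zpow_add₀ hq0]; ring_nf
  unfold qtrinomTerm
  rw [qmul3Z_pascal (pow_ne_zero 2 hq0) hq h]
  linear_combination (-qmul3Z (q ^ 2) c (j - 1) m * qpoch (-q) q m.toNat) * f1
    + (q ^ (2 * c * j) * qpoch (-q) q m.toNat * qmul3Z (q ^ 2) c j (m - 1)) * f2
    - (q ^ (2 * j) * q ^ (2 * c * j)) * hP
    - (qmul3Z (q ^ 2) (c - 1) j m * qpoch (-q) q m.toNat) * f3

lemma qtrinomTerm_exchange (c j m : ℤ) :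
    q ^ (2 * j) * (q ^ (m + 1) - 1) * qtrinomTerm q c j (m + 1)
      = (q ^ (2 * c + 2) - 1) * qtrinomTerm q (c + 1) j m := by
  unfold qtrinomTerm
  rcases lt_trichotomy m (-1) with hm | rfl | hm
  · rw [qmul3Z_of_neg _ (by omega), qmul3Z_of_neg _ (m := m) (by omega)]; ring
  · rw [qmul3Z_of_neg _ (m := -1) (by omega)]; simp
  lift m to ℕ using by omega
  have hx := qmul3Z_exchange hq c j m
  rw [← zpow_two_mul q (c + 1), show 2 * (c + 1) = 2 * c + 2 by ring] at hx
  have f : q ^ (2 * (c + 1) * j) = q ^ (2 * c * j) * q ^ (2 * j) := by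
    rw [← zpow_add₀ hq0]; ring_nf
  rw [show ((m : ℤ) + 1) = ((m + 1 : ℕ) : ℤ) by push_cast; ring, zpow_natCast] at hx ⊢
  rw [Int.toNat_natCast, Int.toNat_natCast, qpoch_succ]
  linear_combination (q ^ (2 * j) * q ^ (2 * c * j) * qpoch (-q) q m) * hx
    - (qmul3Z (q ^ 2) (c + 1) j m * (q ^ (2 * c + 2) - 1) * qpoch (-q) q m) * f

end qtrinomTerm

def qtrinomSummand (q : K) (a b c : ℤ) : K := qtrinomTerm q c (a + c) (b - 2 * c)

def qtrinomSum (q : K) (a b : ℤ) : K :=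
  ∑ c ∈ Finset.range (b.toNat + 1), qtrinomSummand q a b c

lemma qtrinomSummand_recurrence {q : K} (hq0 : q ≠ 0) (hq : ¬IsOfFinOrder (q ^ 2)) {a b : ℤ}
    (h : 0 < a + b) (c : ℤ) :
    qtrinomSummand q a b c = q ^ (2 * c) * qtrinomSummand q (a - 1) b c
      - (q ^ (2 * (c + 1)) - 1) * qtrinomSummand q (a - 1) b (c + 1)
      + (q ^ (2 * a + b - 1) + q ^ (2 * a + b)) * qtrinomSummand q a (b - 1) c
      + q ^ (4 * a + 2 * b) * qtrinomSummand q (a + 1) (b - 2) (c - 1) := by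
  have hP := qtrinomTerm_pascal hq0 hq (c := c) (j := a + c) (m := b - 2 * c) (by omega)
  have hE := qtrinomTerm_exchange hq0 hq c (a + c) (b - 2 * c - 2)
  have e1 : q ^ (2 * (a + c)) * q ^ (b - 2 * c) = q ^ (2 * a + b) := by
    rw [← zpow_add₀ hq0]; ring_nf
  have e2 : q ^ (2 * (a + c)) * q ^ (b - 2 * c - 1) = q ^ (2 * a + b - 1) := by
    rw [← zpow_add₀ hq0]; ring_nf
  simp only [qtrinomSummand]
  rw [show a - 1 + c = a + c - 1 by ring, show a - 1 + (c + 1) = a + c by ring,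
    show b - 2 * (c + 1) = b - 2 * c - 2 by ring, show b - 1 - 2 * c = b - 2 * c - 1 by ring,
    show a + 1 + (c - 1) = a + c by ring, show b - 2 - 2 * (c - 1) = b - 2 * c by ring,
    show 4 * a + 2 * b = 4 * (a + c) + 2 * (b - 2 * c) by ring, hP]
  rw [show b - 2 * c - 2 + 1 = b - 2 * c - 1 by ring, show 2 * c + 2 = 2 * (c + 1) by ring] at hE
  linear_combination qtrinomTerm q c (a + c) (b - 2 * c - 1) * e1 - hE
    + qtrinomTerm q c (a + c) (b - 2 * c - 1) * e2

lemma qtrinomSummand_eq_zero (q : K) {a b c : ℤ} (h : c < 0 ∨ a + c < 0 ∨ b < 2 * c) :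
    qtrinomSummand q a b c = 0 := by
  rw [qtrinomSummand, qtrinomTerm, qmul3Z_of_neg _ (by omega), zero_mul, zero_mul]

lemma sum_range_qtrinomSummand (q : K) (a b : ℤ) {N : ℕ} (hN : b.toNat + 1 ≤ N) :
    ∑ c ∈ Finset.range N, qtrinomSummand q a b c = qtrinomSum q a b := by
  refine (Finset.sum_subset (Finset.range_subset_range.2 hN) fun c _ hc => ?_).symm
  exact qtrinomSummand_eq_zero q (by rw [Finset.mem_range] at hc; omega)

lemma qtrinomSum_recurrence {q : K} (hq0 : q ≠ 0) (hq : ¬IsOfFinOrder (q ^ 2)) {a b : ℤ}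
    (h : 0 < a + b) :
    qtrinomSum q a b = qtrinomSum q (a - 1) b
      + (q ^ (2 * a + b - 1) + q ^ (2 * a + b)) * qtrinomSum q a (b - 1)
      + q ^ (4 * a + 2 * b) * qtrinomSum q (a + 1) (b - 2) := by
  obtain ⟨N, hN⟩ : ∃ N, N = b.toNat + 2 := ⟨_, rfl⟩
  have telescope : ∑ c ∈ Finset.range N, (q ^ (2 * (c : ℤ)) * qtrinomSummand q (a - 1) b c
      - (q ^ (2 * ((c : ℤ) + 1)) - 1) * qtrinomSummand q (a - 1) b (c + 1))
      = qtrinomSum q (a - 1) b := by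
    let g : ℕ → K := fun c => (q ^ (2 * (c : ℤ)) - 1) * qtrinomSummand q (a - 1) b c
    have hg : g 0 - g N = 0 := by
      simp [g, qtrinomSummand_eq_zero q (a := a - 1) (b := b) (c := N) (by omega)]
    rw [← sum_range_qtrinomSummand q (a - 1) b (N := N) (by omega), ← sub_eq_zero,
      ← Finset.sum_sub_distrib, ← hg, ← Finset.sum_range_sub']
    refine Finset.sum_congr rfl fun c _ => ?_
    simp only [g]; push_cast; ring
  have shift : ∑ c ∈ Finset.range N, qtrinomSummand q (a + 1) (b - 2) (c - 1)
      = qtrinomSum q (a + 1) (b - 2) := by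
    rw [hN, Finset.sum_range_succ', qtrinomSummand_eq_zero q (by simp), add_zero,
      ← sum_range_qtrinomSummand q (a + 1) (b - 2) (N := b.toNat + 1) (by omega)]
    simp
  rw [← sum_range_qtrinomSummand q a b (by omega : b.toNat + 1 ≤ N),
    Finset.sum_congr rfl fun (c : ℕ) _ => qtrinomSummand_recurrence hq0 hq h (c : ℤ),
    Finset.sum_add_distrib, Finset.sum_add_distrib, telescope, ← Finset.mul_sum,
    ← Finset.mul_sum, shift, sum_range_qtrinomSummand q a (b - 1) (by omega)]

lemma qtrinomSum_eq_qbinomZ_of_add_eq_zero (q : K) {a b : ℤ} (h : a + b = 0) :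
    qtrinomSum q a b = qbinomZ q (2 * (a + b)) b := by
  rw [qtrinomSum, Finset.sum_eq_single 0 (fun c _ hc => qtrinomSummand_eq_zero q (by omega))
    (by simp)]
  rcases eq_or_ne b 0 with rfl | hb
  · obtain rfl : a = 0 := by omega
    simp [qtrinomSummand, qtrinomTerm, qmul3Z, qbinomZ, qpoch]
  · rw [qtrinomSummand_eq_zero q (by omega), qbinomZ, if_neg (by omega)]

theorem qtrinomSum_eq_qbinomZ {q : K} (hq0 : q ≠ 0) (hq : ¬IsOfFinOrder q) {a b : ℤ}
    (hab : 0 ≤ a + b) : qtrinomSum q a b = qbinomZ q (2 * (a + b)) b := by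
  have hq2 : ¬IsOfFinOrder (q ^ 2) := by simp [isOfFinOrder_pow, hq]
  obtain ⟨n, hn⟩ : ∃ n : ℕ, a + b = n := ⟨(a + b).toNat, by omega⟩
  induction n generalizing a b with
  | zero => exact qtrinomSum_eq_qbinomZ_of_add_eq_zero q (by omega)
  | succ n ih =>
    rw [qtrinomSum_recurrence hq0 hq2 (by omega), qbinomZ_two_mul_recurrence hq0 hq (by omega),
      ih (by omega) (by omega), ih (by omega) (by omega), ih (by omega) (by omega)]

lemma Xq_ne_zero : Xq ≠ 0 := RatFunc.X_ne_zero

lemma not_isOfFinOrder_Xq : ¬IsOfFinOrder Xq := by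
  rw [isOfFinOrder_iff_pow_eq_one]
  rintro ⟨n, hn, h⟩
  have := congrArg RatFunc.intDegree h
  rw [Xq, RatFunc.X, ← map_pow, RatFunc.intDegree_polynomial, RatFunc.intDegree_one] at this
  simp only [Polynomial.natDegree_pow, Polynomial.natDegree_X, mul_one, Int.natCast_eq_zero] at this
  omega

/-- For integers `a, b` with `a + b ≥ 0`,
`Σ_{c ≥ 0} [a+b choose c, a+c, b−2c]_{λ²} · λ^{2c(a+c)} · (−λ; λ)_{b−2c}
  = [2(a+b) choose b]_λ` in `ℚ(λ)`.  (The sum is finite: all terms with `2c > b`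
vanish, so summing over `0 ≤ c ≤ b` captures every nonzero term.) -/
theorem stmt4 (a b : ℤ) (hab : 0 ≤ a + b) :
    ∑ c ∈ Finset.range (b.toNat + 1),
      qmul3Z (Xq ^ 2) (c : ℤ) (a + c) (b - 2 * c) * Xq ^ (2 * (c : ℤ) * (a + c))
        * qpoch (-Xq) Xq (b - 2 * c).toNat
    = qbinomZ Xq (2 * (a + b)) b :=
  qtrinomSum_eq_qbinomZ Xq_ne_zero not_isOfFinOrder_Xq hab
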